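/- The probability distribution D that takes value 1 with probability 1/√2 and value −1 with probability 1 − 1/√2 satisfies the 2-sample median constraint with equality (Pr[Y_1 + Y_2 ≤ 0] = 1/2 for Y_1, Y_2 i.i.d. ~ D) and has E[D] = √2 − 1. Combined with the upper bound θ_2 ≤ √2 − 1, this shows θ_2 = √2 − 1. -/

import Mathlib

/-!
A sum of two `±1` samples is positive only when both samples equal `1`, so for the law taking
the value `1` with probability `p` the median event has probability `1 - p²`, while the mean is
`2p - 1`. At `p = 1/√2` these are `1/2` and `√2 - 1`.
-/

open MeasureTheory

theorem measure_pi_fin_two_sum_le (μ : Measure ℝ) [SigmaFinite μ] (c : ℝ) :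
    Measure.pi (fun _ : Fin 2 => μ) {y | ∑ i, y i ≤ c} = μ.prod μ {q | q.1 + q.2 ≤ c} := by
  have hT : MeasurableSet {q : ℝ × ℝ | q.1 + q.2 ≤ c} :=
    measurableSet_le (by fun_prop) measurable_const
  rw [← (measurePreserving_piFinTwo fun _ : Fin 2 => μ).measure_preimage hT.nullMeasurableSet]
  congr 1
  ext y
  simp [MeasurableEquiv.piFinTwo, Fin.sum_univ_two]

noncomputable def twoPoint (p : ℝ) : Measure ℝ :=
  ENNReal.ofReal p • Measure.dirac 1 + ENNReal.ofReal (1 - p) • Measure.dirac (-1)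

instance (p : ℝ) : IsFiniteMeasure (twoPoint p) :=
  ⟨by simp [twoPoint, ENNReal.add_lt_top]⟩

theorem twoPoint_Iic (p x : ℝ) :
    twoPoint p (Set.Iic x) = (Set.Iic x).indicator (fun _ => ENNReal.ofReal p) 1
      + (Set.Iic x).indicator (fun _ => ENNReal.ofReal (1 - p)) (-1) := by
  simp [twoPoint, Measure.dirac_apply' _ measurableSet_Iic, Set.indicator_apply]

theorem integral_id_twoPoint {p : ℝ} (hp0 : 0 ≤ p) (hp1 : p ≤ 1) :
    ∫ x, x ∂twoPoint p = 2 * p - 1 := by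
  rw [twoPoint, integral_add_measure, integral_smul_measure, integral_smul_measure,
    integral_dirac, integral_dirac, ENNReal.toReal_ofReal hp0,
    ENNReal.toReal_ofReal (sub_nonneg.2 hp1)]
  · simp only [smul_eq_mul]
    ring
  all_goals exact (integrable_dirac (by simp)).smul_measure ENNReal.ofReal_ne_top

theorem twoPoint_prod_sum_nonpos {p : ℝ} (hp0 : 0 ≤ p) (hp1 : p ≤ 1) :
    (twoPoint p).prod (twoPoint p) {q | q.1 + q.2 ≤ 0} = ENNReal.ofReal (1 - p ^ 2) := by
  have hT : MeasurableSet {q : ℝ × ℝ | q.1 + q.2 ≤ 0} :=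
    measurableSet_le (by fun_prop) measurable_const
  have hsection (x : ℝ) : Prod.mk x ⁻¹' {q : ℝ × ℝ | q.1 + q.2 ≤ 0} = Set.Iic (-x) := by
    ext y
    simp [le_neg_iff_add_nonpos_left]
  have hq : 0 ≤ 1 - p := sub_nonneg.2 hp1
  rw [Measure.prod_apply hT, twoPoint, lintegral_add_measure, lintegral_smul_measure,
    lintegral_smul_measure, lintegral_dirac, lintegral_dirac, ← twoPoint]
  simp only [hsection, twoPoint_Iic]
  norm_num
  rw [← ENNReal.ofReal_add hp0 hq, add_sub_cancel, ENNReal.ofReal_one, mul_one,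
    ← ENNReal.ofReal_mul hp0, ← ENNReal.ofReal_add (by positivity) hq]
  ring_nf

/-- The distribution taking value `1` with probability `1/√2` and value `-1`
with probability `1 - 1/√2` satisfies the 2-sample median constraint with equality
(`Pr[Y₁ + Y₂ ≤ 0] = 1/2`) and has expectation `√2 - 1`. -/
theorem stmt10 (μ : Measure ℝ)
    (hμ : μ = ENNReal.ofReal (1 / Real.sqrt 2) • Measure.dirac (1 : ℝ)
        + ENNReal.ofReal (1 - 1 / Real.sqrt 2) • Measure.dirac (-1 : ℝ)) :
    Measure.pi (fun _ : Fin 2 => μ) {y | ∑ i, y i ≤ 0} = (1 : ENNReal) / 2 ∧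
      ∫ x, x ∂μ = Real.sqrt 2 - 1 := by
  obtain rfl : μ = twoPoint (1 / Real.sqrt 2) := hμ
  have hp0 : 0 ≤ 1 / Real.sqrt 2 := by positivity
  have hp1 : 1 / Real.sqrt 2 ≤ 1 := by
    rw [div_le_one (by positivity), Real.one_le_sqrt]
    norm_num
  have hsq : (1 / Real.sqrt 2) ^ 2 = 1 / 2 := by
    rw [div_pow, Real.sq_sqrt zero_le_two, one_pow]
  constructor
  · rw [measure_pi_fin_two_sum_le, twoPoint_prod_sum_nonpos hp0 hp1, hsq]
    norm_num [ENNReal.ofReal_div_of_pos]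
  · rw [integral_id_twoPoint hp0 hp1, mul_one_div, Real.div_sqrt]
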